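/- Divergence-free identity for the fundamental solution: let G(x) = |x|^{2−Q} on ℝ^{2n+1} ∖ {0}, where |x| is the Korányi norm and Q = 2n+2. Then the ℝ^{2n+1}-valued vector field V = (Q−2) G ∇^H G + |∇^H G|² Ξ has vanishing Euclidean divergence at every point of ℝ^{2n+1} ∖ {0}: ∑_{i=1}^{2n+1} ∂V_i/∂x_i = 0. -/

import Mathlib

open scoped BigOperators
open MeasureTheory

noncomputable section

/-- The underlying space `ℝ^{2n+1}` of the Heisenberg group `ℍⁿ`,
with coordinates `(x, y, t)`. -/
abbrev Heis (n : ℕ) : Type := (Fin n → ℝ) × (Fin n → ℝ) × ℝ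

/-- The Heisenberg group law `(z,t)·(w,s) = (z+w, t+s+2 Im (z ⬝ conj w))`. -/
def Hmul {n : ℕ} (p q : Heis n) : Heis n :=
  (p.1 + q.1, p.2.1 + q.2.1,
    p.2.2 + q.2.2 + 2 * ∑ k, (p.2.1 k * q.1 k - p.1 k * q.2.1 k))

/-- Group inverse on the Heisenberg group. -/
def Hinv {n : ℕ} (p : Heis n) : Heis n := (-p.1, -p.2.1, -p.2.2)

/-- Heisenberg dilations `δ_λ(z,t) = (λz, λ²t)`. -/
def Hdil {n : ℕ} (lam : ℝ) (p : Heis n) : Heis n :=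
  (lam • p.1, lam • p.2.1, lam ^ 2 * p.2.2)

/-- Coordinate vector of the horizontal field `X_k = ∂/∂x_k + 2 y_k ∂/∂t` at `p`. -/
def XVec {n : ℕ} (k : Fin n) (p : Heis n) : Heis n := (Pi.single k 1, 0, 2 * p.2.1 k)

/-- Coordinate vector of the horizontal field `Y_k = ∂/∂y_k − 2 x_k ∂/∂t` at `p`. -/
def YVec {n : ℕ} (k : Fin n) (p : Heis n) : Heis n := (0, Pi.single k 1, -(2 * p.1 k))

/-- The horizontal derivative `X_k f`. -/
def Xd {n : ℕ} (k : Fin n) (f : Heis n → ℝ) (p : Heis n) : ℝ := fderiv ℝ f p (XVec k p)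

/-- The horizontal derivative `Y_k f`. -/
def Yd {n : ℕ} (k : Fin n) (f : Heis n → ℝ) (p : Heis n) : ℝ := fderiv ℝ f p (YVec k p)

/-- The sublaplacian `Δ_b = (1/4) ∑ (X_k² + Y_k²)`. -/
def subLap {n : ℕ} (f : Heis n → ℝ) (p : Heis n) : ℝ :=
  (1 / 4) * ∑ k : Fin n, (Xd k (Xd k f) p + Yd k (Yd k f) p)

/-- The Korányi norm `|(z,t)| = (|z|⁴ + t²)^{1/4}`. -/
def knorm {n : ℕ} (p : Heis n) : ℝ :=
  ((∑ k, (p.1 k ^ 2 + p.2.1 k ^ 2)) ^ 2 + p.2.2 ^ 2) ^ (1 / 4 : ℝ)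

/-- The generator of dilations `Ξ = ∑ (x_k ∂/∂x_k + y_k ∂/∂y_k) + 2t ∂/∂t`, as a map. -/
def XiVec {n : ℕ} (p : Heis n) : Heis n := (p.1, p.2.1, 2 * p.2.2)

/-- The derivative `Ξ f` along the generator of dilations. -/
def Xid {n : ℕ} (f : Heis n → ℝ) (p : Heis n) : ℝ := fderiv ℝ f p (XiVec p)

/-- The Jerison–Lee solution `U(z,t) = c₁ (t² + (1+|z|²)²)^{-1/2}` on `ℍ¹`. -/
def JL (c1 : ℝ) (p : Heis 1) : ℝ :=
  c1 * (p.2.2 ^ 2 + (1 + ∑ k, (p.1 k ^ 2 + p.2.1 k ^ 2)) ^ 2) ^ (-(1 / 2) : ℝ)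


/-- The subriemannian (horizontal) gradient, as an `ℝ^{2n+1}`-valued field. -/
def gradH {n : ℕ} (f : Heis n → ℝ) (p : Heis n) : Heis n :=
  (1 / 4 : ℝ) • ∑ k : Fin n, ((Xd k f p) • XVec k p + (Yd k f p) • YVec k p)

/-- The squared norm of the horizontal gradient, `|∇^H f|² = (1/4) ∑ ((X_k f)² + (Y_k f)²)`. -/
def normSqH {n : ℕ} (f : Heis n → ℝ) (p : Heis n) : ℝ :=
  (1 / 4) * ∑ k : Fin n, ((Xd k f p) ^ 2 + (Yd k f p) ^ 2)

end

namespace FSDF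

noncomputable section

open ContinuousLinearMap

variable {n : ℕ}

/-- `|z|²`. -/
def zs (x : Heis n) : ℝ := ∑ k, (x.1 k ^ 2 + x.2.1 k ^ 2)

/-- `N = |z|⁴ + t²`, the fourth power of the Korányi norm. -/
def Nf (x : Heis n) : ℝ := zs x ^ 2 + x.2.2 ^ 2

lemma Nf_nonneg (x : Heis n) : 0 ≤ Nf x := by unfold Nf; positivity

lemma zs_nonneg (x : Heis n) : 0 ≤ zs x :=
  Finset.sum_nonneg fun k _ => by positivity

/-- coordinate projections as CLMs -/
def pX (k : Fin n) : Heis n →L[ℝ] ℝ :=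
  (ContinuousLinearMap.proj k).comp (ContinuousLinearMap.fst ℝ (Fin n → ℝ) ((Fin n → ℝ) × ℝ))

def pY (k : Fin n) : Heis n →L[ℝ] ℝ :=
  ((ContinuousLinearMap.proj k).comp (ContinuousLinearMap.fst ℝ (Fin n → ℝ) ℝ)).comp
    (ContinuousLinearMap.snd ℝ (Fin n → ℝ) ((Fin n → ℝ) × ℝ))

def pT : Heis n →L[ℝ] ℝ :=
  ((ContinuousLinearMap.snd ℝ (Fin n → ℝ) ℝ)).comp
    (ContinuousLinearMap.snd ℝ (Fin n → ℝ) ((Fin n → ℝ) × ℝ))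

@[simp] lemma pX_apply (k : Fin n) (v : Heis n) : pX k v = v.1 k := rfl
@[simp] lemma pY_apply (k : Fin n) (v : Heis n) : pY k v = v.2.1 k := rfl
@[simp] lemma pT_apply (v : Heis n) : pT v = v.2.2 := rfl

/-- derivative of `Nf`. -/
def dN (x : Heis n) : Heis n →L[ℝ] ℝ :=
  (2 * zs x) • (∑ k, ((2 * x.1 k) • pX k + (2 * x.2.1 k) • pY k)) + (2 * x.2.2) • pT

lemma dN_apply (x v : Heis n) :
    dN x v = 4 * zs x * (∑ k, (x.1 k * v.1 k + x.2.1 k * v.2.1 k)) + 2 * x.2.2 * v.2.2 := by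
  simp only [dN, ContinuousLinearMap.add_apply, ContinuousLinearMap.smul_apply,
    ContinuousLinearMap.sum_apply, pX_apply, pY_apply, pT_apply, smul_eq_mul]
  rw [Finset.mul_sum, Finset.mul_sum]
  congr 1
  exact Finset.sum_congr rfl fun k _ => by ring

lemma hasFDerivAt_zs (x : Heis n) :
    HasFDerivAt (zs (n := n)) (∑ k, ((2 * x.1 k) • pX k + (2 * x.2.1 k) • pY k)) x := by
  have hfun : (zs (n := n)) = fun y => ∑ k, (y.1 k * y.1 k + y.2.1 k * y.2.1 k) := by
    funext y; simp [zs, pow_two]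
  rw [hfun]
  have h := HasFDerivAt.fun_sum (u := Finset.univ)
    (fun k (_ : k ∈ Finset.univ) =>
      (((pX k).hasFDerivAt (x := x)).mul ((pX k).hasFDerivAt (x := x))).add
        (((pY k).hasFDerivAt (x := x)).mul ((pY k).hasFDerivAt (x := x))))
  have he : (∑ k : Fin n, ((pX k) x • pX k + (pX k) x • pX k +
      ((pY k) x • pY k + (pY k) x • pY k)))
      = ∑ k : Fin n, ((2 * x.1 k) • pX k + (2 * x.2.1 k) • pY k) := by
    refine Finset.sum_congr rfl fun k _ => ?_
    refine ContinuousLinearMap.ext fun v => ?_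
    simp only [ContinuousLinearMap.add_apply, ContinuousLinearMap.smul_apply,
      pX_apply, pY_apply, smul_eq_mul]
    ring
  exact he ▸ h

lemma hasFDerivAt_Nf (x : Heis n) : HasFDerivAt (Nf (n := n)) (dN x) x := by
  have hfun : (Nf (n := n)) = fun y => zs y * zs y + y.2.2 * y.2.2 := by
    funext y; simp [Nf, pow_two]
  rw [hfun]
  have h := ((hasFDerivAt_zs x).mul (hasFDerivAt_zs x)).add
    ((pT.hasFDerivAt (x := x)).mul (pT.hasFDerivAt (x := x)))
  have he : (zs x • ∑ k : Fin n, ((2 * x.1 k) • pX k + (2 * x.2.1 k) • pY k) +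
        zs x • ∑ k : Fin n, ((2 * x.1 k) • pX k + (2 * x.2.1 k) • pY k) +
      (pT x • pT + pT x • pT)) = dN x := by
    refine ContinuousLinearMap.ext fun v => ?_
    simp only [dN, ContinuousLinearMap.add_apply, ContinuousLinearMap.smul_apply,
      ContinuousLinearMap.sum_apply, pX_apply, pY_apply, pT_apply, smul_eq_mul]
    ring
  exact he ▸ h

end

end FSDF
namespace FSDF

noncomputable section

open ContinuousLinearMap

variable {n : ℕ}

lemma knorm_eq (x : Heis n) : knorm x = Nf x ^ (1/4 : ℝ) := rfl

lemma G_eq :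
    (fun y : Heis n => knorm y ^ (-(2 * (n : ℝ)))) = fun y => Nf y ^ (-(n : ℝ)/2) := by
  funext y
  rw [knorm_eq, ← Real.rpow_mul (Nf_nonneg y)]
  norm_num
  congr 1
  ring

lemma hasFDerivAt_G (x : Heis n) (hx : Nf x ≠ 0) :
    HasFDerivAt (fun y : Heis n => Nf y ^ (-(n : ℝ)/2))
      (((-(n : ℝ)/2) * Nf x ^ ((-(n : ℝ)/2) - 1)) • dN x) x :=
  (hasFDerivAt_Nf x).rpow_const (Or.inl hx)

lemma fderiv_G_apply (x : Heis n) (hx : Nf x ≠ 0) (v : Heis n) :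
    fderiv ℝ (fun y : Heis n => knorm y ^ (-(2 * (n : ℝ)))) x v
      = (-(n : ℝ)/2) * Nf x ^ ((-(n : ℝ)/2) - 1) * dN x v := by
  rw [G_eq, (hasFDerivAt_G x hx).fderiv]
  simp [mul_assoc]

lemma Xd_G (k : Fin n) (x : Heis n) (hx : Nf x ≠ 0) :
    Xd k (fun y : Heis n => knorm y ^ (-(2 * (n : ℝ)))) x
      = (-(n : ℝ)/2) * Nf x ^ ((-(n : ℝ)/2) - 1)
          * (4 * (zs x * x.1 k + x.2.2 * x.2.1 k)) := by
  rw [Xd, fderiv_G_apply x hx, dN_apply]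
  have h1 : ∑ j, (x.1 j * (XVec k x).1 j + x.2.1 j * (XVec k x).2.1 j) = x.1 k := by
    simp [XVec, Pi.single_apply, mul_ite]
  rw [h1]
  have h2 : (XVec k x).2.2 = 2 * x.2.1 k := rfl
  rw [h2]
  ring

lemma Yd_G (k : Fin n) (x : Heis n) (hx : Nf x ≠ 0) :
    Yd k (fun y : Heis n => knorm y ^ (-(2 * (n : ℝ)))) x
      = (-(n : ℝ)/2) * Nf x ^ ((-(n : ℝ)/2) - 1)
          * (4 * (zs x * x.2.1 k - x.2.2 * x.1 k)) := by
  rw [Yd, fderiv_G_apply x hx, dN_apply]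
  have h1 : ∑ j, (x.1 j * (YVec k x).1 j + x.2.1 j * (YVec k x).2.1 j) = x.2.1 k := by
    simp [YVec, Pi.single_apply, mul_ite]
  rw [h1]
  have h2 : (YVec k x).2.2 = -(2 * x.1 k) := rfl
  rw [h2]
  ring

lemma rpow_merge (x : Heis n) (hpos : 0 < Nf x) :
    Nf x ^ (-(n : ℝ)/2) * Nf x ^ ((-(n : ℝ)/2) - 1) = Nf x ^ (-((n : ℝ)+1)) := by
  rw [← Real.rpow_add hpos]
  congr 1
  ring

lemma rpow_merge2 (x : Heis n) (hpos : 0 < Nf x) :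
    Nf x ^ ((-(n : ℝ)/2) - 1) * Nf x ^ ((-(n : ℝ)/2) - 1) * Nf x = Nf x ^ (-((n : ℝ)+1)) := by
  rw [← Real.rpow_add hpos]
  nth_rewrite 2 [← Real.rpow_one (Nf x)]
  rw [← Real.rpow_add hpos]
  congr 1
  ring

lemma normSqH_G (x : Heis n) (hpos : 0 < Nf x) :
    normSqH (fun y : Heis n => knorm y ^ (-(2 * (n : ℝ)))) x
      = (n : ℝ)^2 * zs x * Nf x ^ (-((n : ℝ)+1)) := by
  rw [normSqH]
  have h1 : ∀ k : Fin n, (Xd k (fun y : Heis n => knorm y ^ (-(2 * (n : ℝ)))) x) ^ 2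
      + (Yd k (fun y : Heis n => knorm y ^ (-(2 * (n : ℝ)))) x) ^ 2
      = (4 * (n : ℝ)^2) * (Nf x ^ ((-(n : ℝ)/2) - 1) * Nf x ^ ((-(n : ℝ)/2) - 1) * Nf x)
          * (x.1 k ^ 2 + x.2.1 k ^ 2) := by
    intro k
    rw [Xd_G k x hpos.ne', Yd_G k x hpos.ne', Nf]
    ring
  rw [Finset.sum_congr rfl fun k _ => h1 k, ← Finset.mul_sum, ← zs, rpow_merge2 x hpos]
  ring

lemma gradH_fst (f : Heis n → ℝ) (x : Heis n) (j : Fin n) :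
    (gradH f x).1 j = (1/4) * Xd j f x := by
  simp [gradH, XVec, YVec, Prod.fst_sum, Finset.sum_apply, Pi.single_apply]

lemma gradH_snd1 (f : Heis n → ℝ) (x : Heis n) (j : Fin n) :
    (gradH f x).2.1 j = (1/4) * Yd j f x := by
  simp [gradH, XVec, YVec, Prod.snd_sum, Prod.fst_sum, Finset.sum_apply, Pi.single_apply]

lemma gradH_t (f : Heis n → ℝ) (x : Heis n) :
    (gradH f x).2.2 = (1/4) * ∑ k, (Xd k f x * (2 * x.2.1 k) + Yd k f x * (-(2 * x.1 k))) := by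
  simp [gradH, XVec, YVec, Prod.snd_sum, Finset.mul_sum]

end

end FSDF
namespace FSDF

noncomputable section

open ContinuousLinearMap

variable {n : ℕ}

/-- The linear field `W v = (-y, x, 0)`. -/
def W : Heis n →L[ℝ] Heis n :=
  (-((ContinuousLinearMap.fst ℝ (Fin n → ℝ) ℝ).comp
      (ContinuousLinearMap.snd ℝ (Fin n → ℝ) ((Fin n → ℝ) × ℝ)))).prod
    ((ContinuousLinearMap.fst ℝ (Fin n → ℝ) ((Fin n → ℝ) × ℝ)).prod 0)

@[simp] lemma W_apply (v : Heis n) : W v = (-v.2.1, v.1, 0) := rfl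

lemma Nf_pos (p : Heis n) (hp : p ≠ 0) : 0 < Nf p := by
  rcases (Nf_nonneg p).lt_or_eq with h | h
  · exact h
  · exfalso
    apply hp
    have h2 : zs p ^ 2 + p.2.2 ^ 2 = 0 := h.symm
    have hz : zs p = 0 := by nlinarith [sq_nonneg (zs p), sq_nonneg p.2.2]
    have ht : p.2.2 = 0 := by nlinarith [sq_nonneg (zs p), sq_nonneg p.2.2]
    have hc : ∀ k : Fin n, p.1 k ^ 2 + p.2.1 k ^ 2 = 0 := by
      intro k
      have := (Finset.sum_eq_zero_iff_of_nonneg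
        (fun i (_ : i ∈ Finset.univ) => by positivity)).mp hz k (Finset.mem_univ k)
      exact this
    have h1 : p.1 = 0 := funext fun k => by
      simp only [Pi.zero_apply]
      nlinarith [sq_nonneg (p.1 k), sq_nonneg (p.2.1 k), hc k]
    have h2' : p.2.1 = 0 := funext fun k => by
      simp only [Pi.zero_apply]
      nlinarith [sq_nonneg (p.1 k), sq_nonneg (p.2.1 k), hc k]
    exact Prod.ext h1 (Prod.ext h2' ht)

lemma key (x : Heis n) (hpos : 0 < Nf x) :
    (((2 * n + 2 : ℝ) - 2) * knorm x ^ (-(2 * n : ℝ)))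
        • gradH (fun y : Heis n => knorm y ^ (-(2 * n : ℝ))) x
      + normSqH (fun y : Heis n => knorm y ^ (-(2 * n : ℝ))) x • XiVec x
    = ((n : ℝ) ^ 2 * x.2.2 * Nf x ^ (-((n : ℝ) + 1))) • W x := by
  have hk : knorm x ^ (-(2 * (n : ℝ))) = Nf x ^ (-(n : ℝ)/2) := congrFun G_eq x
  have hm := rpow_merge x hpos
  refine Prod.ext ?_ (Prod.ext ?_ ?_)
  · funext j
    show (((2 * n + 2 : ℝ) - 2) * knorm x ^ (-(2 * n : ℝ)))
          * (gradH (fun y : Heis n => knorm y ^ (-(2 * n : ℝ))) x).1 j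
        + normSqH (fun y : Heis n => knorm y ^ (-(2 * n : ℝ))) x * (XiVec x).1 j
      = ((n : ℝ) ^ 2 * x.2.2 * Nf x ^ (-((n : ℝ) + 1))) * (-(x.2.1 j))
    rw [gradH_fst, Xd_G j x hpos.ne', normSqH_G x hpos, hk]
    show _ * _ + _ * x.1 j = _
    linear_combination (-(n : ℝ)^2 * (zs x * x.1 j + x.2.2 * x.2.1 j)) * hm
  · funext j
    show (((2 * n + 2 : ℝ) - 2) * knorm x ^ (-(2 * n : ℝ)))
          * (gradH (fun y : Heis n => knorm y ^ (-(2 * n : ℝ))) x).2.1 j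
        + normSqH (fun y : Heis n => knorm y ^ (-(2 * n : ℝ))) x * (XiVec x).2.1 j
      = ((n : ℝ) ^ 2 * x.2.2 * Nf x ^ (-((n : ℝ) + 1))) * (x.1 j)
    rw [gradH_snd1, Yd_G j x hpos.ne', normSqH_G x hpos, hk]
    show _ * _ + _ * x.2.1 j = _
    linear_combination (-(n : ℝ)^2 * (zs x * x.2.1 j - x.2.2 * x.1 j)) * hm
  · show (((2 * n + 2 : ℝ) - 2) * knorm x ^ (-(2 * n : ℝ)))
          * (gradH (fun y : Heis n => knorm y ^ (-(2 * n : ℝ))) x).2.2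
        + normSqH (fun y : Heis n => knorm y ^ (-(2 * n : ℝ))) x * (XiVec x).2.2
      = ((n : ℝ) ^ 2 * x.2.2 * Nf x ^ (-((n : ℝ) + 1))) * 0
    rw [gradH_t, normSqH_G x hpos, hk]
    have h1 : ∀ k : Fin n,
        Xd k (fun y : Heis n => knorm y ^ (-(2 * (n : ℝ)))) x * (2 * x.2.1 k)
          + Yd k (fun y : Heis n => knorm y ^ (-(2 * (n : ℝ)))) x * (-(2 * x.1 k))
        = ((-(n : ℝ)/2) * Nf x ^ ((-(n : ℝ)/2) - 1) * (8 * x.2.2)) * (x.1 k ^ 2 + x.2.1 k ^ 2) := by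
      intro k
      rw [Xd_G k x hpos.ne', Yd_G k x hpos.ne']
      ring
    rw [Finset.sum_congr rfl fun k _ => h1 k, ← Finset.mul_sum, ← zs]
    show _ * (_ * _) + _ * (2 * x.2.2) = _
    linear_combination (-(2 : ℝ) * (n : ℝ)^2 * x.2.2 * zs x) * hm

end

end FSDF
open FSDF

/-- Divergence-free identity for the fundamental solution: with `G = |x|^{2−Q}` (Korányi norm),
the field `V = (Q−2) G ∇^H G + |∇^H G|² Ξ` has vanishing Euclidean divergence away from `0`. -/
theorem fundamental_solution_divergence_free (n : ℕ) (hn : 0 < n) (p : Heis n) (hp : p ≠ 0) :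
    LinearMap.trace ℝ (Heis n)
      (fderiv ℝ (fun x : Heis n =>
        (((2 * n + 2 : ℝ) - 2) * knorm x ^ (-(2 * n : ℝ)))
            • gradH (fun y : Heis n => knorm y ^ (-(2 * n : ℝ))) x
          + normSqH (fun y : Heis n => knorm y ^ (-(2 * n : ℝ))) x • XiVec x) p).toLinearMap
      = 0 := by
  have hNp : 0 < Nf p := Nf_pos p hp
  -- the function agrees with V near p
  have hopen : IsOpen {x : Heis n | 0 < Nf x} :=
    isOpen_lt continuous_const (continuous_iff_continuousAt.mpr
      fun x => (hasFDerivAt_Nf x).differentiableAt.continuousAt)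
  have hmem : {x : Heis n | 0 < Nf x} ∈ nhds p := hopen.mem_nhds hNp
  have heq : (fun x : Heis n =>
        (((2 * n + 2 : ℝ) - 2) * knorm x ^ (-(2 * n : ℝ)))
            • gradH (fun y : Heis n => knorm y ^ (-(2 * n : ℝ))) x
          + normSqH (fun y : Heis n => knorm y ^ (-(2 * n : ℝ))) x • XiVec x)
      =ᶠ[nhds p] (fun x : Heis n =>
        ((n : ℝ) ^ 2 * x.2.2 * Nf x ^ (-((n : ℝ) + 1))) • W x) :=
    Filter.eventuallyEq_of_mem hmem fun x hx => key x hx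
  -- derivative of V
  have hh1 : HasFDerivAt (fun x : Heis n => (n : ℝ) ^ 2 * x.2.2) (((n : ℝ) ^ 2) • pT) p :=
    (pT.hasFDerivAt (x := p)).const_mul _
  have hh2 : HasFDerivAt (fun x : Heis n => Nf x ^ (-((n : ℝ) + 1)))
      (((-((n : ℝ) + 1)) * Nf p ^ (-((n : ℝ) + 1) - 1)) • dN p) p :=
    (hasFDerivAt_Nf p).rpow_const (Or.inl hNp.ne')
  have hmul := hh1.fun_mul hh2
  have hV := hmul.fun_smul ((W (n := n)).hasFDerivAt (x := p))
  rw [heq.fderiv_eq, hV.fderiv]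
  set b : Module.Basis (Fin n ⊕ (Fin n ⊕ Unit)) ℝ (Heis n) :=
    (Pi.basisFun ℝ (Fin n)).prod ((Pi.basisFun ℝ (Fin n)).prod (Module.Basis.singleton Unit ℝ)) with hb
  rw [LinearMap.trace_eq_matrix_trace ℝ b, Matrix.trace]
  rw [Fintype.sum_sum_type]
  simp only [Matrix.diag_apply, LinearMap.toMatrix_apply, hb, Module.Basis.prod_apply,
    Pi.basisFun_apply, Module.Basis.singleton_apply, Module.Basis.prod_repr_inl, Module.Basis.prod_repr_inr,
    Pi.basisFun_repr, Module.Basis.singleton_repr]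
  simp only [Fintype.sum_sum_type, Sum.elim_inl, Sum.elim_inr, Function.comp_apply,
    LinearMap.inl_apply, LinearMap.inr_apply, Module.Basis.prod_apply, Pi.basisFun_apply,
    Module.Basis.singleton_apply, ContinuousLinearMap.coe_coe, ContinuousLinearMap.add_apply,
    ContinuousLinearMap.smul_apply, ContinuousLinearMap.smulRight_apply, W_apply, pT_apply,
    dN_apply, Prod.smul_fst, Prod.smul_snd, Prod.fst_add, Prod.snd_add, Pi.add_apply,
    Pi.smul_apply, Pi.neg_apply, smul_eq_mul, Pi.single_apply, mul_ite, mul_one, mul_zero,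
    Finset.sum_ite_eq, Finset.sum_ite_eq', Finset.mem_univ, if_true,
    Module.Basis.prod_repr_inl, Module.Basis.prod_repr_inr, Pi.basisFun_repr, Module.Basis.singleton_repr,
    Prod.fst_zero, Prod.snd_zero, Pi.zero_apply, neg_zero, add_zero, zero_add, zero_mul,
    mul_zero, Finset.sum_const_zero]
  rw [← Finset.sum_add_distrib]
  exact Finset.sum_eq_zero fun k _ => by ring
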